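/- For every integer k ≥ 2 there exists an admissible set H = {h_1, ..., h_k} with h_1 = 0 < h_2 < ... < h_k such that: (i) every h_i is divisible by K = 4·∏_{p < 2k, p prime} p; (ii) for all 1 ≤ i < j ≤ k, the difference h_j - h_i has a prime divisor p > 2k with p^2 not dividing h_j - h_i; and (iii) if {i,j} ≠ {s,t} are two distinct pairs with 1 ≤ i < j ≤ k and 1 ≤ s < t ≤ k, then no prime p > 2k divides both h_i - h_j and h_s - h_t. -/

import Mathlib

/-!
The differences are made coprime "at large primes" one term at a time. Given `c 0 < ⋯ < c (m-1)`,
the next term `x` is chosen by the Chinese remainder theorem with `x ≡ c i + p_i (mod p_i²)` for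
fresh large primes `p_i`, so that `p_i` divides `x - c i` exactly once, and with `x` outside the
`m` residues `c i (mod q)` for every large prime `q` dividing an earlier difference (possible as
`q > m`). Then no large prime divides two different differences. Finally `h i = K (c i - c 0)`:
scaling by `K` is invisible to primes `> 2k`, every prime `< 2k` divides all `h i`, and every
larger prime exceeds the number `k` of residues the `h i` can occupy.
-/

open Finset

theorem exists_forall_ne_of_card_lt {α β : Type*} [Fintype α] [Fintype β] (f : α → β)
    (h : Fintype.card α < Fintype.card β) : ∃ b, ∀ a, f a ≠ b := by
  by_contra! hf
  exact (Fintype.card_le_of_surjective f hf).not_gt h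

theorem exists_forall_not_dvd_sub {q m : ℕ} (hmq : m < q) (c : ℕ → ℤ) :
    ∃ r : ℤ, ∀ i < m, ¬ (q : ℤ) ∣ c i - r := by
  have : NeZero q := ⟨by omega⟩
  obtain ⟨a, ha⟩ :=
    exists_forall_ne_of_card_lt (fun i : Fin m => (c i : ZMod q)) (by simpa using hmq)
  refine ⟨a.val, fun i hi hdvd => ha ⟨i, hi⟩ ?_⟩
  simpa using ((ZMod.intCast_eq_intCast_iff_dvd_sub _ _ q).2 hdvd).symm

theorem Int.exists_gt_forall_dvd_sub {ι : Type*} [Fintype ι] {n : ι → ℤ} (hn : ∀ i, n i ≠ 0)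
    (hcop : Pairwise (Function.onFun IsCoprime n)) (a : ι → ℤ) (b : ℤ) :
    ∃ x, b < x ∧ ∀ i, n i ∣ x - a i := by
  obtain ⟨r, hr⟩ := Ideal.exists_forall_sub_mem_ideal (I := fun i => Ideal.span {n i})
    (fun i j hij => (Ideal.isCoprime_span_singleton_iff _ _).2 (hcop hij)) a
  set M := ∏ i, n i
  have hM : M ≠ 0 := prod_ne_zero_iff.2 fun i _ => hn i
  -- shift the solution `r` by a multiple of `M` into the interval `(b, b + |M|]`
  set x := b + 1 + (r - (b + 1)) % M
  have hxr : x ≡ r [ZMOD M] := by simpa using (Int.mod_modEq (r - (b + 1)) M).add_left (b + 1)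
  refine ⟨x, by have := Int.emod_nonneg (r - (b + 1)) hM; omega, fun i => ?_⟩
  have hrx : n i ∣ r - a i := Ideal.mem_span_singleton.1 (hr i)
  simpa using dvd_add ((dvd_prod_of_mem n (mem_univ i)).trans hxr.symm.dvd) hrx

theorem exists_gt_forall_prime_pow_dvd_sub {ι : Type*} [Fintype ι] {P : ι → ℕ}
    (hP : ∀ i, (P i).Prime) (hP_inj : Function.Injective P) (e : ι → ℕ) (a : ι → ℤ) (b : ℤ) :
    ∃ x, b < x ∧ ∀ i, (P i : ℤ) ^ e i ∣ x - a i := by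
  simpa using Int.exists_gt_forall_dvd_sub (n := fun i => ((P i ^ e i : ℕ) : ℤ))
    (fun i => by have := (hP i).pos; positivity)
    (fun i j hij => Nat.isCoprime_iff_coprime.2 <|
      Nat.Coprime.pow _ _ <| (Nat.coprime_primes (hP i) (hP j)).2 (hP_inj.ne hij)) a b

theorem exists_injective_primes_gt (L : ℕ) :
    ∃ p : ℕ → ℕ, Function.Injective p ∧ ∀ i, (p i).Prime ∧ L < p i := by
  refine ⟨fun i => Nat.nth Nat.Prime (L + i), fun i j hij => ?_, fun i => ⟨?_, ?_⟩⟩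
  · have := Nat.nth_injective Nat.infinite_setOfPred_prime hij
    omega
  · exact Nat.prime_nth_prime _
  · have := Nat.add_two_le_nth_prime (L + i)
    dsimp only
    omega

theorem Prime.dvd_and_not_sq_dvd_of_sq_dvd_sub {R : Type*} [CommRing R] [IsDomain R] {p y : R}
    (hp : Prime p) (h : p ^ 2 ∣ y - p) : p ∣ y ∧ ¬ p ^ 2 ∣ y := by
  refine ⟨by simpa using ((dvd_pow_self p two_ne_zero).trans h).add (dvd_refl p), fun hy => ?_⟩
  have hpp : p ^ 2 ∣ p ^ 1 := by simpa using dvd_sub hy h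
  exact absurd ((pow_dvd_pow_iff hp.ne_zero hp.not_isUnit).1 hpp) (by norm_num)

theorem exists_next_term (B m : ℕ) (c : ℕ → ℤ) (F : Finset ℕ) (hF : ∀ q ∈ F, q.Prime ∧ m < q) :
    ∃ x, (∀ i < m, c i < x) ∧
      (∀ i < m, ∃ p : ℕ, p.Prime ∧ B < p ∧ (p : ℤ) ∣ x - c i ∧ ¬ (p : ℤ) ^ 2 ∣ x - c i) ∧
      ∀ q ∈ F, ∀ i < m, ¬ (q : ℤ) ∣ x - c i := by
  choose r hr using fun q : F => exists_forall_not_dvd_sub (hF q q.2).2 c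
  obtain ⟨p, hp_inj, hp⟩ := exists_injective_primes_gt (max B (F.sup id))
  -- `x ≡ c i + p i (mod (p i)²)` for `i < m`, and `x ≡ r q (mod q)` for `q ∈ F`
  let P : Fin m ⊕ F → ℕ := Sum.elim (fun i => p i) Subtype.val
  have hP : ∀ j, (P j).Prime := by
    rintro (i | q)
    exacts [(hp i).1, (hF q q.2).1]
  have hP_inj : Function.Injective P := by
    refine (hp_inj.comp Fin.val_injective).sumElim Subtype.val_injective fun i q hiq => ?_
    have hq : q.1 ≤ F.sup id := le_sup (f := id) q.2
    have := (hp i).2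
    simp only [Function.comp_apply] at hiq
    omega
  obtain ⟨x, hx_gt, hx⟩ := exists_gt_forall_prime_pow_dvd_sub hP hP_inj
    (Sum.elim (fun _ => 2) (fun _ => 1)) (Sum.elim (fun i => c i + p i) (fun q => r q))
    (∑ i ∈ range m, |c i|)
  refine ⟨x, fun i hi => ?_, fun i hi => ⟨p i, (hp i).1, (le_max_left _ _).trans_lt (hp i).2, ?_⟩,
    fun q hq i hi hqx => hr ⟨q, hq⟩ i hi ?_⟩
  · calc c i ≤ |c i| := le_abs_self _
      _ ≤ ∑ i ∈ range m, |c i| := single_le_sum (fun j _ => abs_nonneg (c j)) (mem_range.2 hi)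
      _ < x := hx_gt
  · have hxi : (p i : ℤ) ^ 2 ∣ x - c i - p i := by
      simpa [P, sub_add_eq_sub_sub] using hx (.inl ⟨i, hi⟩)
    exact (Nat.prime_iff_prime_int.1 (hp i).1).dvd_and_not_sq_dvd_of_sq_dvd_sub hxi
  · have hxq : (q : ℤ) ∣ x - r ⟨q, hq⟩ := by simpa [P] using hx (.inr ⟨q, hq⟩)
    simpa using dvd_sub hxq hqx

/-- Conditions (ii) and (iii) of the theorem, with "large" meaning `> B`, for the increasing
sequence `c 0 < ⋯ < c (m - 1)`. -/
structure PrivatePrimeDiffs (B m : ℕ) (c : ℕ → ℤ) : Prop where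
  lt : ∀ i j, i < j → j < m → c i < c j
  exists_prime : ∀ i j, i < j → j < m →
    ∃ p : ℕ, p.Prime ∧ B < p ∧ (p : ℤ) ∣ c j - c i ∧ ¬ (p : ℤ) ^ 2 ∣ c j - c i
  not_dvd_and_dvd : ∀ i j s t, i < j → j < m → s < t → t < m → (i, j) ≠ (s, t) →
    ∀ p : ℕ, p.Prime → B < p → ¬ ((p : ℤ) ∣ c j - c i ∧ (p : ℤ) ∣ c t - c s)

namespace PrivatePrimeDiffs

variable {B m : ℕ} {c : ℕ → ℤ}

theorem exists_extend (hc : PrivatePrimeDiffs B m c) (hm : m ≤ B) :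
    ∃ x, PrivatePrimeDiffs B (m + 1) (Function.update c m x) := by
  let N := ∏ st ∈ (range m ×ˢ range m).filter (fun st => st.1 < st.2), (c st.2 - c st.1)
  have hN : N ≠ 0 := prod_ne_zero_iff.2 fun st hst => by
    simp only [mem_filter, mem_product, mem_range] at hst
    exact sub_ne_zero.2 (hc.lt _ _ hst.2 hst.1.2).ne'
  have hdvdN : ∀ s t, s < t → t < m → c t - c s ∣ N := fun s t hst ht =>
    dvd_prod_of_mem (fun st : ℕ × ℕ => c st.2 - c st.1) (a := (s, t)) (by simp; omega)
  obtain ⟨x, hx_gt, hx_prime, hx_avoid⟩ :=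
    exists_next_term B m c (N.natAbs.primeFactors.filter (B < ·)) fun q hq => by
      simp only [mem_filter, Nat.mem_primeFactors] at hq
      exact ⟨hq.1.1, by omega⟩
  -- a large prime dividing some `x - c i` divides no old difference, hence no other `x - c s`
  have hfresh : ∀ q : ℕ, q.Prime → B < q → ∀ i < m, (q : ℤ) ∣ x - c i →
      ∀ s t, s < t → t < m → ¬ (q : ℤ) ∣ c t - c s := fun q hq hBq i hi hqi s t hst ht hqst =>
    hx_avoid q (by simp [hq, hN, hBq, Int.natCast_dvd.1 (hqst.trans (hdvdN s t hst ht))]) i hi hqi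
  have hfresh₂ : ∀ q : ℕ, q.Prime → B < q → ∀ i < m, ∀ s < m, i ≠ s →
      ¬ ((q : ℤ) ∣ x - c i ∧ (q : ℤ) ∣ x - c s) := by
    rintro q hq hBq i hi s hs his ⟨hqi, hqs⟩
    rcases his.lt_or_gt with his | his
    · refine hfresh q hq hBq i hi hqi i s his hs ?_
      rw [← sub_sub_sub_cancel_left (c i) (c s) x]
      exact dvd_sub hqi hqs
    · refine hfresh q hq hBq i hi hqi s i his hi ?_
      rw [← sub_sub_sub_cancel_left (c s) (c i) x]
      exact dvd_sub hqs hqi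
  have hold : ∀ j < m, Function.update c m x j = c j := fun j hj => Function.update_of_ne hj.ne _ _
  have hnew : Function.update c m x m = x := Function.update_self _ _ _
  refine ⟨x, fun i j hij hj => ?_, fun i j hij hj => ?_,
    fun i j s t hij hj hst ht hne q hq hBq => ?_⟩
  · rw [hold i (by omega)]
    rcases (Nat.lt_succ_iff_lt_or_eq.1 hj) with hj | rfl
    · exact hold j hj ▸ hc.lt i j hij hj
    · rw [hnew]
      exact hx_gt i hij
  · rw [hold i (by omega)]
    rcases (Nat.lt_succ_iff_lt_or_eq.1 hj) with hj | rfl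
    · exact hold j hj ▸ hc.exists_prime i j hij hj
    · rw [hnew]
      exact hx_prime i hij
  · rw [hold i (by omega), hold s (by omega)]
    rcases (Nat.lt_succ_iff_lt_or_eq.1 hj) with hj | rfl <;>
      rcases (Nat.lt_succ_iff_lt_or_eq.1 ht) with ht | rfl
    · rw [hold j hj, hold t ht]
      exact hc.not_dvd_and_dvd i j s t hij hj hst ht hne q hq hBq
    · rw [hold j hj, hnew]
      exact fun h => hfresh q hq hBq s hst h.2 i j hij hj h.1
    · rw [hold t ht, hnew]
      exact fun h => hfresh q hq hBq i hij h.1 s t hst ht h.2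
    · rw [hnew]
      exact hfresh₂ q hq hBq i hij s hst fun his => hne (his ▸ rfl)

theorem le (hc : PrivatePrimeDiffs B m c) {i j : ℕ} (hij : i ≤ j) (hj : j < m) :
    c i ≤ c j := by
  rcases hij.lt_or_eq with hij | rfl
  exacts [(hc.lt i j hij hj).le, le_rfl]

theorem mul_sub (hc : PrivatePrimeDiffs B m c) {K : ℤ} (hK : 0 < K)
    (hKp : ∀ p : ℕ, p.Prime → B < p → ¬ (p : ℤ) ∣ K) (a : ℤ) :
    PrivatePrimeDiffs B m (fun i => K * (c i - a)) := by
  have hcop : ∀ p : ℕ, p.Prime → B < p → IsCoprime (p : ℤ) K := fun p hp hBp =>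
    (Irreducible.coprime_iff_not_dvd (Nat.prime_iff_prime_int.1 hp).irreducible).2 (hKp p hp hBp)
  have hsub : ∀ i j, K * (c j - a) - K * (c i - a) = K * (c j - c i) := fun _ _ => by ring
  refine ⟨fun i j hij hj => ?_, fun i j hij hj => ?_, fun i j s t hij hj hst ht hne p hp hBp => ?_⟩
  · exact mul_lt_mul_of_pos_left (sub_lt_sub_right (hc.lt i j hij hj) a) hK
  · obtain ⟨p, hp, hBp, hdvd, hsq⟩ := hc.exists_prime i j hij hj
    rw [hsub]
    exact ⟨p, hp, hBp, hdvd.mul_left K,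
      fun h => hsq ((hcop p hp hBp).pow_left.dvd_of_dvd_mul_left h)⟩
  · rw [hsub, hsub]
    exact fun h => hc.not_dvd_and_dvd i j s t hij hj hst ht hne p hp hBp
      ⟨(hcop p hp hBp).dvd_of_dvd_mul_left h.1, (hcop p hp hBp).dvd_of_dvd_mul_left h.2⟩

end PrivatePrimeDiffs

theorem exists_privatePrimeDiffs (B : ℕ) : ∀ m ≤ B + 1, ∃ c, PrivatePrimeDiffs B m c
  | 0, _ => ⟨0, ⟨by omega, by omega, by omega⟩⟩
  | m + 1, hm =>
    let ⟨_, hc⟩ := exists_privatePrimeDiffs B m (by omega)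
    let ⟨_, hc'⟩ := hc.exists_extend (by omega)
    ⟨_, hc'⟩

theorem Nat.Prime.not_dvd_four_mul_prod_primes_lt {p n : ℕ} (hp : p.Prime) (hp2 : p ≠ 2)
    (hnp : n ≤ p) : ¬ p ∣ 4 * ∏ q ∈ (range n).filter Nat.Prime, q := by
  rw [hp.prime.dvd_mul, hp.prime.dvd_finsetProd_iff]
  rintro (h4 | ⟨q, hq, hpq⟩)
  · exact hp2 ((Nat.prime_dvd_prime_iff_eq hp Nat.prime_two).1 (hp.dvd_of_dvd_pow (n := 2) h4))
  · simp only [mem_filter, mem_range] at hq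
    have := (Nat.prime_dvd_prime_iff_eq hp hq.2).1 hpq
    omega

theorem exists_forall_natCast_ne {k n : ℕ} (h : Fin k → ℕ) (hkn : k < n)
    (hdvd : ∀ p, p.Prime → p < n → ∀ i, p ∣ h i) (p : ℕ) (hp : p.Prime) :
    ∃ a : ZMod p, ∀ i, (h i : ZMod p) ≠ a := by
  have := Fact.mk hp
  by_cases hpn : p < n
  · exact ⟨1, fun i => by simp [(ZMod.natCast_eq_zero_iff _ p).2 (hdvd p hp hpn i)]⟩
  · exact exists_forall_ne_of_card_lt _ (by simp; omega)

theorem stmt_11 (k : ℕ) (hk : 2 ≤ k) :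
    ∃ h : Fin k → ℕ,
      h ⟨0, by omega⟩ = 0 ∧ StrictMono h ∧
      (∀ p : ℕ, p.Prime → ∃ a : ZMod p, ∀ i, (h i : ZMod p) ≠ a) ∧
      (∀ i, (4 * ∏ p ∈ (Finset.range (2 * k)).filter Nat.Prime, p) ∣ h i) ∧
      (∀ i j : Fin k, i < j →
        ∃ p : ℕ, p.Prime ∧ 2 * k < p ∧ p ∣ (h j - h i) ∧ ¬ p ^ 2 ∣ (h j - h i)) ∧
      (∀ i j s t : Fin k, i < j → s < t → (i, j) ≠ (s, t) →
        ∀ p : ℕ, p.Prime → 2 * k < p → ¬ (p ∣ (h j - h i) ∧ p ∣ (h t - h s))) := by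
  set K := 4 * ∏ p ∈ (Finset.range (2 * k)).filter Nat.Prime, p
  obtain ⟨c, hc⟩ := exists_privatePrimeDiffs (2 * k) k (by omega)
  have hK : 0 < K := Nat.mul_pos (by norm_num) (prod_pos fun q hq => (mem_filter.1 hq).2.pos)
  have hd := hc.mul_sub (K := K) (by exact_mod_cast hK) (fun p hp hkp => by
    exact_mod_cast hp.not_dvd_four_mul_prod_primes_lt (by omega) hkp.le) (c 0)
  set h : Fin k → ℕ := fun i => K * (c i - c 0).toNat
  have hh : ∀ i : Fin k, (h i : ℤ) = K * (c i - c 0) := fun i => by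
    have := hc.le (Nat.zero_le i) i.2
    simp [h, Int.toNat_of_nonneg (sub_nonneg.2 this)]
  have hmono : StrictMono h := fun i j hij => by exact_mod_cast hh i ▸ hh j ▸ hd.lt i j hij j.2
  have hdvd : ∀ (d : ℕ) (i j : Fin k), i < j →
      (d ∣ h j - h i ↔ (d : ℤ) ∣ K * (c j - c 0) - K * (c i - c 0)) := fun d i j hij => by
    rw [← Int.natCast_dvd_natCast, Nat.cast_sub (hmono hij).le, hh, hh]
  have hsmall : ∀ p, p.Prime → p < 2 * k → ∀ i, p ∣ h i := fun p hp hpk i =>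
    (dvd_mul_of_dvd_right (dvd_prod_of_mem _ (by simp [hpk, hp])) 4).mul_right _
  refine ⟨h, by simp [h], hmono, exists_forall_natCast_ne h (by omega) hsmall,
    fun i => dvd_mul_right _ _, fun i j hij => ?_, fun i j s t hij hst hne p hp hkp => ?_⟩
  · obtain ⟨p, hp, hkp, hp1, hp2⟩ := hd.exists_prime i j hij j.2
    exact ⟨p, hp, hkp, (hdvd p i j hij).2 hp1,
      fun h2 => hp2 (by exact_mod_cast (hdvd _ i j hij).1 h2)⟩
  · rw [hdvd p i j hij, hdvd p s t hst]
    exact hd.not_dvd_and_dvd i j s t hij j.2 hst t.2 (by simpa [Fin.ext_iff] using hne) p hp hkp
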